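/- Let p be a prime and G a group such that the commutator subgroup G' has order p, the subgroup G'·G^(p) is contained in Z(G), and the index [G : Z(G)] is finite. Then every subgroup C of G that is maximal among the commutative subgroups of G contains Z(G) and satisfies [C : Z(G)]² = [G : Z(G)]. -/

import Mathlib

/-!
Since `G'` is central, `(g, c) ↦ ⁅g, c⁆` is bimultiplicative, with values in `G' ≅ ℤ/p`. For a maximal
commutative subgroup `C` (which equals its own centralizer, hence contains `Z(G)`), restricting
the second argument to `C` gives a pairing `G × C → ℤ/p` whose left kernel is `C` and whose right
kernel is `Z(G)`. The images of the two sides in the dual of the other are elementary abelian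
`p`-groups, and such a group has as many characters as elements; hence `[G : C] = [C : Z(G)]`,
and `[G : Z(G)] = [G : C] [C : Z(G)]`.
-/

open Subgroup
open scoped commutatorElement

section Duality

variable {p : ℕ} [Fact p.Prime]

theorem card_monoidHom_multiplicative_zmod {P : Type*} [CommGroup P] [Finite P]
    (hP : ∀ x : P, x ^ p = 1) :
    Nat.card (P →* Multiplicative (ZMod p)) = Nat.card P := by
  have : Module (ZMod p) (Additive P) :=
    AddCommGroup.zmodModule fun x => Additive.toMul.injective (hP x.toMul)
  have : Module.Finite (ZMod p) (Additive P) := Module.Finite.of_finite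
  calc Nat.card (P →* Multiplicative (ZMod p))
      = Nat.card (Module.Dual (ZMod p) (Additive P)) :=
        Nat.card_congr (MonoidHom.toAdditiveLeft.trans
          (AddMonoidHom.toZModLinearMapEquiv p).toEquiv)
    _ = Nat.card (Additive P) :=
        Nat.card_congr (Module.finBasis (ZMod p) (Additive P)).toDualEquiv.symm.toEquiv
    _ = Nat.card P := rfl

variable {A B : Type*} [Group A] [Group B]

theorem index_ker_flip_le (β : A →* B →* Multiplicative (ZMod p)) (hβ : β.ker.index ≠ 0) :
    β.flip.ker.index ≤ β.ker.index := by
  let P := β.range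
  let ev : B →* P →* Multiplicative (ZMod p) :=
    (MonoidHom.compHom' P.subtype).comp MonoidHom.eval
  have hev : ev.ker = β.flip.ker := by
    ext b
    simp only [MonoidHom.mem_ker, MonoidHom.ext_iff]
    constructor
    · intro h a
      exact h ⟨β a, a, rfl⟩
    · rintro h ⟨_, a, rfl⟩
      exact h a
  have hP : ∀ φ : P, φ ^ p = 1 := fun φ => Subtype.ext <| MonoidHom.ext fun b => by
    simpa using pow_card_eq_one' (x := φ.1 b)
  rw [index_ker] at hβ
  have : Finite P := Nat.finite_of_card_ne_zero hβ
  have : Finite (P →* Multiplicative (ZMod p)) :=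
    Finite.of_injective _ DFunLike.coe_injective
  calc β.flip.ker.index = Nat.card ev.range := by rw [← hev, index_ker]
    _ ≤ Nat.card (P →* Multiplicative (ZMod p)) := card_le_card_group _
    _ = Nat.card P := card_monoidHom_multiplicative_zmod hP
    _ = β.ker.index := (index_ker β).symm

theorem index_ker_flip_eq (β : A →* B →* Multiplicative (ZMod p)) (hβ : β.ker.index ≠ 0)
    (hβ' : β.flip.ker.index ≠ 0) : β.flip.ker.index = β.ker.index :=
  (index_ker_flip_le β hβ).antisymm (index_ker_flip_le β.flip hβ')

end Duality

section CommutatorPairing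

variable {G : Type*} [Group G]

theorem commutatorElement_mem_commutator (g h : G) : ⁅g, h⁆ ∈ commutator G := by
  rw [_root_.commutator_def]
  exact commutator_mem_commutator (mem_top g) (mem_top h)

variable (hG : commutator G ≤ center G)
include hG

theorem commutatorElement_mul_left_of_le_center (a b c : G) :
    ⁅a * b, c⁆ = ⁅a, c⁆ * ⁅b, c⁆ := by
  have hbc := mem_center_iff.1 (hG (commutatorElement_mem_commutator b c))
  rw [commutatorElement_mul_left_eq_conj_mul, hbc a, mul_inv_cancel_right, hbc]

theorem commutatorElement_mul_right_of_le_center (a b c : G) :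
    ⁅a, b * c⁆ = ⁅a, b⁆ * ⁅a, c⁆ := by
  have hac := mem_center_iff.1 (hG (commutatorElement_mem_commutator a c))
  rw [commutatorElement_mul_right_eq_mul_conj, mul_assoc ⁅a, b⁆, hac, ← mul_assoc,
    mul_inv_cancel_right]

omit hG in
theorem centralizer_le_of_maximal_commutative {C : Subgroup G}
    (hC : ∀ x ∈ C, ∀ y ∈ C, x * y = y * x)
    (hmax : ∀ D : Subgroup G, (∀ x ∈ D, ∀ y ∈ D, x * y = y * x) → C ≤ D → C = D) :
    centralizer C ≤ C := by
  intro x hx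
  have hcomm : ∀ a ∈ insert x (C : Set G), ∀ b ∈ insert x (C : Set G), a * b = b * a := by
    rintro a (rfl | ha) b (rfl | hb)
    · rfl
    · exact (hx b hb).symm
    · exact hx a ha
    · exact hC a ha b hb
  let D := closure (insert x (C : Set G))
  have hD : ∀ a ∈ D, ∀ b ∈ D, a * b = b * a := fun a ha b hb =>
    Set.centralizer_centralizer_comm_of_comm hcomm a
      (closure_le_centralizer_centralizer _ ha) b (closure_le_centralizer_centralizer _ hb)
  rw [hmax D hD fun c hc => subset_closure (Set.mem_insert_of_mem x hc)]
  exact subset_closure (Set.mem_insert x _)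

variable {M : Type*} [CommGroup M] (e : commutator G →* M) (H : Subgroup G)

def commutatorPairing : G →* H →* M :=
  MonoidHom.mk'
    (fun g => MonoidHom.mk' (fun h => e ⟨⁅g, h⁆, commutatorElement_mem_commutator g h⟩)
      fun h k => by
        rw [← map_mul]
        exact congrArg e (Subtype.ext (commutatorElement_mul_right_of_le_center hG g h k)))
    fun g k => MonoidHom.ext fun h => by
      show e _ = e _ * e _
      rw [← map_mul]
      exact congrArg e (Subtype.ext (commutatorElement_mul_left_of_le_center hG g k h))

variable {e}

theorem commutatorPairing_eq_one_iff (he : Function.Injective e) (g : G) (h : H) :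
    commutatorPairing hG e H g h = 1 ↔ g * h = h * g := by
  change e ⟨⁅g, h⁆, _⟩ = 1 ↔ _
  rw [map_eq_one_iff e he, Subgroup.mk_eq_one, commutatorElement_eq_one_iff_mul_comm]

theorem ker_commutatorPairing (he : Function.Injective e) :
    (commutatorPairing hG e H).ker = centralizer H := by
  ext g
  simp only [MonoidHom.mem_ker, MonoidHom.ext_iff, MonoidHom.one_apply,
    commutatorPairing_eq_one_iff hG H he, mem_centralizer_iff, Subtype.forall]
  exact forall₂_congr fun _ _ => eq_comm

theorem ker_flip_commutatorPairing (he : Function.Injective e) :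
    (commutatorPairing hG e H).flip.ker = (center G).subgroupOf H := by
  ext h
  simp only [MonoidHom.mem_ker, MonoidHom.ext_iff, MonoidHom.flip_apply, MonoidHom.one_apply,
    commutatorPairing_eq_one_iff hG H he, mem_subgroupOf, mem_center_iff]

end CommutatorPairing

/-- Let `p` be a prime and `G` a group such that the commutator
subgroup `G'` has order `p`, the subgroup `G'·G^(p)` lies in the centre of `G`,
and `[G : Z(G)]` is finite. Then every maximal commutative subgroup `C` of `G`
contains `Z(G)` and satisfies `[C : Z(G)]² = [G : Z(G)]`. -/
theorem stmt_13 {G : Type*} [Group G] (p : ℕ) (hp : p.Prime)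
    (hcard : Nat.card (commutator G) = p)
    (hle : Subgroup.closure ((commutator G : Set G) ∪ {g : G | ∃ x : G, g = x ^ p}) ≤
      Subgroup.center G)
    (hfin : (Subgroup.center G).index ≠ 0) :
    ∀ C : Subgroup G, (∀ x ∈ C, ∀ y ∈ C, x * y = y * x) →
      (∀ D : Subgroup G, (∀ x ∈ D, ∀ y ∈ D, x * y = y * x) → C ≤ D → C = D) →
      Subgroup.center G ≤ C ∧
        ((Subgroup.center G).relIndex C) ^ 2 = (Subgroup.center G).index := by
  intro C hC hmax
  have hG : commutator G ≤ center G := fun x hx => hle (subset_closure (Or.inl hx))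
  have hCC : centralizer C = C :=
    (centralizer_le_of_maximal_commutative hC hmax).antisymm fun x hx y hy => hC y hy x hx
  have hZC : center G ≤ C := (center_le_centralizer _).trans hCC.le
  have hmul : (center G).relIndex C * C.index = (center G).index := relIndex_mul_index hZC
  obtain ⟨hrel, hidx⟩ := mul_ne_zero_iff.mp (hmul.symm ▸ hfin)
  have : Fact p.Prime := ⟨hp⟩
  let e : commutator G ≃* Multiplicative (ZMod p) := mulEquivOfPrimeCardEq hcard (by simp)
  have he : Function.Injective e.toMonoidHom := e.injective
  have hker : (commutatorPairing hG e.toMonoidHom C).ker = C :=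
    (ker_commutatorPairing hG C he).trans hCC
  have hker' := ker_flip_commutatorPairing hG C he
  have heq := index_ker_flip_eq _ (hker ▸ hidx) (hker' ▸ hrel)
  rw [hker, hker'] at heq
  refine ⟨hZC, ?_⟩
  rw [sq, ← hmul]
  exact congrArg _ heq
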